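/- arXiv:2306.08242 — 2 statements merged into one kernel-verified Lean document; each statement's English description precedes it below -/
import Mathlib

section
/- For every θ ∈ ℝ, the expectation value of Bob's single-qubit Hamiltonian in the post-protocol state satisfies Tr[ρ_QET(θ)·H₂] = (h/√(h²+k²))·[k·sin 2θ + h·(1 − cos 2θ)]. -/
open Matrix Kronecker
open scoped ComplexOrder

noncomputable section

abbrev M2 : Type := Matrix (Fin 2) (Fin 2) ℂ
abbrev M4 : Type := Matrix (Fin 2 × Fin 2) (Fin 2 × Fin 2) ℂ

/-- Pauli X matrix. -/
def σx : M2 := !![0, 1; 1, 0]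
/-- Pauli Y matrix. -/
def σy : M2 := !![0, -Complex.I; Complex.I, 0]
/-- Pauli Z matrix. -/
def σz : M2 := !![1, 0; 0, -1]

def X1 : M4 := σx ⊗ₖ (1 : M2)
def Z1 : M4 := σz ⊗ₖ (1 : M2)
def Z2 : M4 := (1 : M2) ⊗ₖ σz
def Y2 : M4 := (1 : M2) ⊗ₖ σy
def XX : M4 := σx ⊗ₖ σx

def H1m (k h : ℝ) : M4 := (h : ℂ) • Z1 + ((h ^ 2 / Real.sqrt (h ^ 2 + k ^ 2) : ℝ) : ℂ) • (1 : M4)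
def H2m (k h : ℝ) : M4 := (h : ℂ) • Z2 + ((h ^ 2 / Real.sqrt (h ^ 2 + k ^ 2) : ℝ) : ℂ) • (1 : M4)
def Vm (k h : ℝ) : M4 :=
  ((2 * k : ℝ) : ℂ) • XX + ((2 * k ^ 2 / Real.sqrt (h ^ 2 + k ^ 2) : ℝ) : ℂ) • (1 : M4)
def Hm (k h : ℝ) : M4 := H1m k h + H2m k h + Vm k h

def e00 : (Fin 2 × Fin 2) → ℂ := fun p => if p = (0, 0) then 1 else 0
def e11 : (Fin 2 × Fin 2) → ℂ := fun p => if p = (1, 1) then 1 else 0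

/-- the ground state of the minimal QET Hamiltonian -/
def gs (k h : ℝ) : (Fin 2 × Fin 2) → ℂ := fun p =>
  ((1 / Real.sqrt 2 * Real.sqrt (1 - h / Real.sqrt (h ^ 2 + k ^ 2)) : ℝ) : ℂ) * e00 p
  - ((1 / Real.sqrt 2 * Real.sqrt (1 + h / Real.sqrt (h ^ 2 + k ^ 2)) : ℝ) : ℂ) * e11 p

/-- the rank-one operator |g⟩⟨g| -/
def gProj (k h : ℝ) : M4 := Matrix.vecMulVec (gs k h) (star (gs k h))

/-- Alice's projective measurement operator -/
def PA (μ : ℝ) : M4 := (2 : ℂ)⁻¹ • ((1 : M4) + (μ : ℂ) • X1)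

/-- Bob's conditional unitary -/
def UB (ν θ : ℝ) : M4 :=
  ((Real.cos θ : ℝ) : ℂ) • (1 : M4) - ((Complex.I * ν * Real.sin θ) : ℂ) • Y2

/-- the post-protocol state -/
def ρQET (k h θ : ℝ) : M4 :=
  UB (-1) θ * PA (-1) * gProj k h * PA (-1) * (UB (-1) θ)ᴴ
  + UB 1 θ * PA 1 * gProj k h * PA 1 * (UB 1 θ)ᴴ

/-- the normalized post-measurement state with prover outcome μ and verifier operation UB ν θ -/
def ρMN (k h μ ν θ : ℝ) : M4 := (2 : ℂ) • (UB ν θ * PA μ * gProj k h * PA μ * (UB ν θ)ᴴ)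

/-!
Alice's outcome μ and Bob's answer combine into the Kraus operator
`U_B(μ, θ) P_A(μ) = (1 + μ X)/2 ⊗ R_μ(θ)`, where `R_μ(θ) = exp(-i μ θ Y)` is a real rotation of
Bob's qubit. In the Heisenberg picture `R_μ† Z R_μ = cos 2θ · Z - μ sin 2θ · X`, and summing over
μ with `Σ (1 + μ X)/2 = 1`, `Σ μ (1 + μ X)/2 = X` turns `H₂` into
`h cos 2θ · Z₂ - h sin 2θ · X⊗X + (h²/r) · 1`. The ground state has `⟨Z₂⟩ = -h/r` and
`⟨X⊗X⟩ = -k/r`, which gives the claimed value.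
-/

theorem trace_mul_vecMulVec_star_mul_conjTranspose_mul {n R : Type*} [Fintype n] [CommRing R]
    [StarRing R] (A H : Matrix n n R) (u : n → R) :
    (A * vecMulVec u (star u) * Aᴴ * H).trace = star u ⬝ᵥ ((Aᴴ * H * A) *ᵥ u) := by
  rw [Matrix.mul_assoc, Matrix.mul_assoc, trace_mul_comm, Matrix.mul_assoc, vecMulVec_mul,
    trace_vecMulVec, dotProduct_comm, ← dotProduct_mulVec, Matrix.mul_assoc]

def pA (μ : ℝ) : M2 := (2 : ℂ)⁻¹ • ((1 : M2) + (μ : ℂ) • σx)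

def rotY (μ θ : ℝ) : M2 :=
  !![(Real.cos θ : ℂ), -(μ * Real.sin θ : ℂ); (μ * Real.sin θ : ℂ), (Real.cos θ : ℂ)]

def bobHam (k h : ℝ) : M2 := (h : ℂ) • σz + ((h ^ 2 / Real.sqrt (h ^ 2 + k ^ 2) : ℝ) : ℂ) • (1 : M2)

theorem PA_eq_pA_kronecker_one (μ : ℝ) : PA μ = pA μ ⊗ₖ (1 : M2) := by
  simp only [PA, pA, X1, smul_kronecker, add_kronecker, one_kronecker_one]

theorem UB_eq_one_kronecker_rotY (μ θ : ℝ) : UB μ θ = (1 : M2) ⊗ₖ rotY μ θ := by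
  ext ⟨i, j⟩ ⟨i', j'⟩
  fin_cases i <;> fin_cases j <;> fin_cases i' <;> fin_cases j' <;>
    simp [UB, rotY, Y2, σy, kroneckerMap_apply, one_apply] <;> ring_nf <;> simp [Complex.I_sq]

theorem H2m_eq_one_kronecker_bobHam (k h : ℝ) : H2m k h = (1 : M2) ⊗ₖ bobHam k h := by
  simp only [H2m, bobHam, Z2, kronecker_smul, kronecker_add, one_kronecker_one]

theorem conjTranspose_pA (μ : ℝ) : (pA μ)ᴴ = pA μ := by
  ext i j; fin_cases i <;> fin_cases j <;> simp [pA, σx]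

theorem pA_mul_self {μ : ℝ} (hμ : μ ^ 2 = 1) : pA μ * pA μ = pA μ := by
  have hμ' : (μ : ℂ) ^ 2 = 1 := by exact_mod_cast hμ
  ext i j; fin_cases i <;> fin_cases j <;> simp [pA, σx, Matrix.mul_apply, Fin.sum_univ_two] <;>
    grind

theorem pA_one_add_pA_neg_one : pA 1 + pA (-1) = 1 := by
  ext i j; fin_cases i <;> fin_cases j <;> simp [pA, σx] <;> norm_num

theorem pA_one_sub_pA_neg_one : pA 1 - pA (-1) = σx := by
  ext i j; fin_cases i <;> fin_cases j <;> simp [pA, σx] <;> norm_num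

theorem conjTranspose_rotY_mul_rotY {μ : ℝ} (hμ : μ ^ 2 = 1) (θ : ℝ) :
    (rotY μ θ)ᴴ * rotY μ θ = 1 := by
  have hμ' : (μ : ℂ) ^ 2 = 1 := by exact_mod_cast hμ
  have hpy : (Real.cos θ : ℂ) ^ 2 + (Real.sin θ : ℂ) ^ 2 = 1 := by
    exact_mod_cast Real.cos_sq_add_sin_sq θ
  ext i j; fin_cases i <;> fin_cases j <;>
    simp [rotY, Matrix.mul_apply, Fin.sum_univ_two, -Complex.ofReal_cos,
      -Complex.ofReal_sin] <;> grind

theorem conjTranspose_rotY_mul_σz_mul_rotY {μ : ℝ} (hμ : μ ^ 2 = 1) (θ : ℝ) :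
    (rotY μ θ)ᴴ * σz * rotY μ θ =
      (Real.cos (2 * θ) : ℂ) • σz - (μ * Real.sin (2 * θ) : ℂ) • σx := by
  have hμ' : (μ : ℂ) ^ 2 = 1 := by exact_mod_cast hμ
  rw [Real.cos_two_mul', Real.sin_two_mul]
  ext i j; fin_cases i <;> fin_cases j <;>
    simp [rotY, σz, σx, Matrix.mul_apply, Fin.sum_univ_two, -Complex.ofReal_cos,
      -Complex.ofReal_sin] <;> grind

theorem conjTranspose_rotY_mul_bobHam_mul_rotY {μ : ℝ} (hμ : μ ^ 2 = 1) (k h θ : ℝ) :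
    (rotY μ θ)ᴴ * bobHam k h * rotY μ θ =
      ((h * Real.cos (2 * θ) : ℝ) : ℂ) • σz
        + ((h ^ 2 / Real.sqrt (h ^ 2 + k ^ 2) : ℝ) : ℂ) • (1 : M2)
        + (μ : ℂ) • ((-(h * Real.sin (2 * θ)) : ℝ) : ℂ) • σx := by
  simp only [bobHam, Matrix.mul_add, Matrix.add_mul, Matrix.mul_smul, Matrix.smul_mul,
    Matrix.mul_one, conjTranspose_rotY_mul_rotY hμ, conjTranspose_rotY_mul_σz_mul_rotY hμ]
  push_cast
  module

def qetKraus (μ θ : ℝ) : M4 := pA μ ⊗ₖ rotY μ θ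

theorem UB_mul_PA (μ θ : ℝ) : UB μ θ * PA μ = qetKraus μ θ := by
  rw [UB_eq_one_kronecker_rotY, PA_eq_pA_kronecker_one, ← mul_kronecker_mul, Matrix.one_mul,
    Matrix.mul_one, qetKraus]

theorem conjTranspose_PA (μ : ℝ) : (PA μ)ᴴ = PA μ := by
  rw [PA_eq_pA_kronecker_one, conjTranspose_kronecker, conjTranspose_pA, conjTranspose_one]

theorem ρQET_eq (k h θ : ℝ) :
    ρQET k h θ = qetKraus (-1) θ * gProj k h * (qetKraus (-1) θ)ᴴ
      + qetKraus 1 θ * gProj k h * (qetKraus 1 θ)ᴴ := by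
  simp only [ρQET, ← UB_mul_PA, conjTranspose_mul, conjTranspose_PA, Matrix.mul_assoc]

theorem conjTranspose_qetKraus_mul_H2m_mul_qetKraus {μ : ℝ} (hμ : μ ^ 2 = 1) (k h θ : ℝ) :
    (qetKraus μ θ)ᴴ * H2m k h * qetKraus μ θ =
      pA μ ⊗ₖ ((rotY μ θ)ᴴ * bobHam k h * rotY μ θ) := by
  rw [qetKraus, H2m_eq_one_kronecker_bobHam, conjTranspose_kronecker, ← mul_kronecker_mul,
    ← mul_kronecker_mul, conjTranspose_pA, Matrix.mul_one, pA_mul_self hμ]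

def qetObservable (k h θ : ℝ) : M4 :=
  ((h * Real.cos (2 * θ) : ℝ) : ℂ) • Z2 + ((h ^ 2 / Real.sqrt (h ^ 2 + k ^ 2) : ℝ) : ℂ) • 1
    - ((h * Real.sin (2 * θ) : ℝ) : ℂ) • XX

theorem sum_conjTranspose_qetKraus_mul_H2m_mul_qetKraus (k h θ : ℝ) :
    (qetKraus (-1) θ)ᴴ * H2m k h * qetKraus (-1) θ + (qetKraus 1 θ)ᴴ * H2m k h * qetKraus 1 θ
      = qetObservable k h θ := by
  rw [conjTranspose_qetKraus_mul_H2m_mul_qetKraus (by norm_num),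
    conjTranspose_qetKraus_mul_H2m_mul_qetKraus (by norm_num),
    conjTranspose_rotY_mul_bobHam_mul_rotY (by norm_num),
    conjTranspose_rotY_mul_bobHam_mul_rotY (by norm_num)]
  calc _ = (pA 1 + pA (-1)) ⊗ₖ (((h * Real.cos (2 * θ) : ℝ) : ℂ) • σz
        + ((h ^ 2 / Real.sqrt (h ^ 2 + k ^ 2) : ℝ) : ℂ) • (1 : M2))
        + (pA 1 - pA (-1)) ⊗ₖ (((-(h * Real.sin (2 * θ)) : ℝ) : ℂ) • σx) := by
        ext ⟨i, j⟩ ⟨i', j'⟩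
        simp only [kroneckerMap_apply, Matrix.add_apply, Matrix.sub_apply, Matrix.smul_apply,
          smul_eq_mul]
        push_cast
        ring
    _ = qetObservable k h θ := by
        rw [pA_one_add_pA_neg_one, pA_one_sub_pA_neg_one, qetObservable, Z2, XX]
        simp only [kronecker_add, kronecker_smul, one_kronecker_one]
        push_cast
        module

def amp00 (k h : ℝ) : ℝ := 1 / Real.sqrt 2 * Real.sqrt (1 - h / Real.sqrt (h ^ 2 + k ^ 2))

def amp11 (k h : ℝ) : ℝ := 1 / Real.sqrt 2 * Real.sqrt (1 + h / Real.sqrt (h ^ 2 + k ^ 2))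

theorem star_gs_dotProduct_mulVec_gs (k h : ℝ) (M : M4) :
    star (gs k h) ⬝ᵥ (M *ᵥ gs k h) =
      (amp00 k h : ℂ) ^ 2 * M (0, 0) (0, 0) + (amp11 k h : ℂ) ^ 2 * M (1, 1) (1, 1)
        - (amp00 k h : ℂ) * amp11 k h * (M (0, 0) (1, 1) + M (1, 1) (0, 0)) := by
  simp only [dotProduct, Pi.star_apply, gs, one_div, Complex.ofReal_mul, Complex.ofReal_inv, e00,
    mul_ite, mul_one, mul_zero, e11, star_sub, RCLike.star_def, mulVec, Fintype.sum_prod_type,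
    Prod.mk.injEq, Fin.sum_univ_two, and_true, zero_ne_one, and_false, ↓reduceIte, sub_zero,
    one_ne_zero, zero_sub, mul_neg, neg_zero, add_zero, zero_add, map_zero, neg_mul, map_mul,
    map_inv₀, Complex.conj_ofReal, zero_mul, amp00, amp11]
  ring

theorem abs_div_sqrt_sq_add_sq_le_one (h k : ℝ) : |h / Real.sqrt (h ^ 2 + k ^ 2)| ≤ 1 := by
  rw [abs_div, abs_of_nonneg (Real.sqrt_nonneg _)]
  exact div_le_one_of_le₀ (Real.abs_le_sqrt (by nlinarith)) (Real.sqrt_nonneg _)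

theorem amp00_sq (k h : ℝ) : amp00 k h ^ 2 = (1 - h / Real.sqrt (h ^ 2 + k ^ 2)) / 2 := by
  have hx := (abs_le.mp (abs_div_sqrt_sq_add_sq_le_one h k)).2
  rw [amp00, mul_pow, Real.sq_sqrt (by linarith), div_pow, Real.sq_sqrt zero_le_two]
  ring

theorem amp11_sq (k h : ℝ) : amp11 k h ^ 2 = (1 + h / Real.sqrt (h ^ 2 + k ^ 2)) / 2 := by
  have hx := (abs_le.mp (abs_div_sqrt_sq_add_sq_le_one h k)).1
  rw [amp11, mul_pow, Real.sq_sqrt (by linarith), div_pow, Real.sq_sqrt zero_le_two]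
  ring

theorem amp00_mul_amp11 {k : ℝ} (hk : 0 < k) (h : ℝ) :
    amp00 k h * amp11 k h = k / (2 * Real.sqrt (h ^ 2 + k ^ 2)) := by
  set r := Real.sqrt (h ^ 2 + k ^ 2)
  have hr : 0 < r := Real.sqrt_pos.2 (by positivity)
  have hr2 : r ^ 2 = h ^ 2 + k ^ 2 := Real.sq_sqrt (by positivity)
  have hx := abs_le.mp (abs_div_sqrt_sq_add_sq_le_one h k)
  have hprod : (1 - h / r) * (1 + h / r) = (k / r) ^ 2 := by
    field_simp
    linear_combination hr2
  calc amp00 k h * amp11 k h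
      = (1 / Real.sqrt 2) ^ 2 * Real.sqrt ((1 - h / r) * (1 + h / r)) := by
        rw [amp00, amp11, Real.sqrt_mul (by linarith)]; ring
    _ = k / (2 * r) := by
        rw [hprod, Real.sqrt_sq (by positivity), div_pow, Real.sq_sqrt zero_le_two]; ring

theorem expectation_one_gs (k h : ℝ) : star (gs k h) ⬝ᵥ ((1 : M4) *ᵥ gs k h) = 1 := by
  rw [star_gs_dotProduct_mulVec_gs]
  simp only [one_apply_eq, one_apply_ne (show ((0 : Fin 2), (0 : Fin 2)) ≠ (1, 1) by decide),
    one_apply_ne (show ((1 : Fin 2), (1 : Fin 2)) ≠ (0, 0) by decide)]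
  rw_mod_cast [amp00_sq, amp11_sq]
  push_cast
  ring

theorem expectation_Z2_gs (k h : ℝ) :
    star (gs k h) ⬝ᵥ (Z2 *ᵥ gs k h) = ((-(h / Real.sqrt (h ^ 2 + k ^ 2)) : ℝ) : ℂ) := by
  rw [star_gs_dotProduct_mulVec_gs]
  simp only [Z2, σz, kroneckerMap_apply, one_apply_eq, of_apply, cons_val', cons_val_zero,
    cons_val_fin_one, mul_one, cons_val_one, mul_neg, ne_eq, zero_ne_one, not_false_eq_true,
    one_apply_ne, mul_zero, one_ne_zero, add_zero, sub_zero, Complex.ofReal_neg, Complex.ofReal_div]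
  rw_mod_cast [amp00_sq, amp11_sq]
  ring

theorem expectation_XX_gs {k : ℝ} (hk : 0 < k) (h : ℝ) :
    star (gs k h) ⬝ᵥ (XX *ᵥ gs k h) = ((-(k / Real.sqrt (h ^ 2 + k ^ 2)) : ℝ) : ℂ) := by
  rw [star_gs_dotProduct_mulVec_gs]
  simp only [XX, σx, kroneckerMap_apply, of_apply, cons_val', cons_val_zero, cons_val_fin_one,
    mul_zero, cons_val_one, add_zero, mul_one, zero_sub, Complex.ofReal_neg, Complex.ofReal_div,
    neg_inj]
  rw_mod_cast [amp00_mul_amp11 hk]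
  push_cast
  ring

theorem expectation_qetObservable_gs {k : ℝ} (hk : 0 < k) (h θ : ℝ) :
    star (gs k h) ⬝ᵥ (qetObservable k h θ *ᵥ gs k h) =
      ((h / Real.sqrt (h ^ 2 + k ^ 2) *
        (k * Real.sin (2 * θ) + h * (1 - Real.cos (2 * θ))) : ℝ) : ℂ) := by
  simp only [qetObservable, sub_mulVec, add_mulVec, smul_mulVec, dotProduct_sub, dotProduct_add,
    dotProduct_smul, expectation_one_gs, expectation_Z2_gs, expectation_XX_gs hk, smul_eq_mul]
  push_cast
  ring

theorem qet_H2_expectation_general (k h : ℝ) (hk : 0 < k) (θ : ℝ) :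
    (ρQET k h θ * H2m k h).trace =
      ((h / Real.sqrt (h ^ 2 + k ^ 2) *
        (k * Real.sin (2 * θ) + h * (1 - Real.cos (2 * θ))) : ℝ) : ℂ) := by
  rw [ρQET_eq, Matrix.add_mul, trace_add, gProj, trace_mul_vecMulVec_star_mul_conjTranspose_mul,
    trace_mul_vecMulVec_star_mul_conjTranspose_mul, ← dotProduct_add, ← add_mulVec,
    sum_conjTranspose_qetKraus_mul_H2m_mul_qetKraus, expectation_qetObservable_gs hk]

/-- `Tr[ρ_QET(θ)·H₂] = (h/√(h²+k²))·[k·sin 2θ + h·(1 − cos 2θ)]`. -/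
theorem qet_H2_expectation (k h : ℝ) (hk : 0 < k) (hh : 0 < h) (θ : ℝ) :
    (ρQET k h θ * H2m k h).trace =
      ((h / Real.sqrt (h ^ 2 + k ^ 2) *
        (k * Real.sin (2 * θ) + h * (1 - Real.cos (2 * θ))) : ℝ) : ℂ) :=
  qet_H2_expectation_general k h hk θ
end
end

section
/- (Zero-knowledge of single-qubit Z measurements.) Fix θ ∈ ℝ. For every real number z, each of the sets {(k,h) ∈ ℝ² : k > 0, h > 0, Tr[ρ_QET(k,h,θ)·(Z⊗I₂)] = z} and {(k,h) ∈ ℝ² : k > 0, h > 0, Tr[ρ_QET(k,h,θ)·(I₂⊗Z)] = z} is uncountable whenever it is nonempty. -/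
open Matrix Kronecker
open scoped ComplexOrder

noncomputable section

/- The state `ρQET k h θ` depends on `(k, h)` only through `h / √(h² + k²)`, which is invariant
under positive rescaling of `(k, h)`. Hence, for any observable, each level set of its expectation
value in the open quadrant is a cone, and a cone containing a nonzero point contains a copy of
`(0, ∞)`. -/

theorem not_countable_of_forall_pos_smul_mem {E : Type*} [AddCommGroup E] [Module ℝ E]
    {S : Set E} {p : E} (hp : p ≠ 0) (hS : ∀ t : ℝ, 0 < t → t • p ∈ S) : ¬ S.Countable := by
  intro hc
  have hIoo : (Set.Ioo (0 : ℝ) 1).Countable :=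
    (hc.preimage (smul_left_injective ℝ hp)).mono fun t ht => hS t ht.1
  exact absurd (Cardinal.Real.Ioo_countable_iff.1 hIoo) zero_lt_one.not_ge

theorem sqrt_mul_sq_add_mul_sq {t : ℝ} (ht : 0 ≤ t) (a b : ℝ) :
    Real.sqrt ((t * a) ^ 2 + (t * b) ^ 2) = t * Real.sqrt (a ^ 2 + b ^ 2) := by
  rw [show (t * a) ^ 2 + (t * b) ^ 2 = t ^ 2 * (a ^ 2 + b ^ 2) by ring,
    Real.sqrt_mul (sq_nonneg t), Real.sqrt_sq ht]

theorem gs_mul_mul {t : ℝ} (ht : 0 < t) (k h : ℝ) : gs (t * k) (t * h) = gs k h := by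
  unfold gs
  rw [sqrt_mul_sq_add_mul_sq ht.le, mul_div_mul_left _ _ ht.ne']

theorem ρQET_mul_mul {t : ℝ} (ht : 0 < t) (k h θ : ℝ) :
    ρQET (t * k) (t * h) θ = ρQET k h θ := by
  simp only [ρQET, gProj, gs_mul_mul ht]

theorem not_countable_trace_ρQET_mul_eq (θ z : ℝ) (A : M4)
    (hne : {p : ℝ × ℝ | 0 < p.1 ∧ 0 < p.2 ∧ (ρQET p.1 p.2 θ * A).trace = (z : ℂ)}.Nonempty) :
    ¬ {p : ℝ × ℝ | 0 < p.1 ∧ 0 < p.2 ∧ (ρQET p.1 p.2 θ * A).trace = (z : ℂ)}.Countable := by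
  obtain ⟨⟨k, h⟩, hk, hh, htr⟩ := hne
  refine not_countable_of_forall_pos_smul_mem (p := (k, h)) (by simp [hk.ne']) fun t ht => ?_
  exact ⟨mul_pos ht hk, mul_pos ht hh, by simpa [ρQET_mul_mul ht] using htr⟩

/-- Zero-knowledge of single-qubit Z measurements: each attained value of
`Tr[ρ_QET(k,h,θ)·(Z⊗I₂)]` and of `Tr[ρ_QET(k,h,θ)·(I₂⊗Z)]` has an uncountable preimage
in the open positive quadrant (points are `p = (k, h)`). -/
theorem qet_Z_zero_knowledge (θ : ℝ) (z : ℝ) :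
    ({p : ℝ × ℝ | 0 < p.1 ∧ 0 < p.2 ∧
        (ρQET p.1 p.2 θ * Z1).trace = (z : ℂ)}.Nonempty →
      ¬ {p : ℝ × ℝ | 0 < p.1 ∧ 0 < p.2 ∧
        (ρQET p.1 p.2 θ * Z1).trace = (z : ℂ)}.Countable) ∧
    ({p : ℝ × ℝ | 0 < p.1 ∧ 0 < p.2 ∧
        (ρQET p.1 p.2 θ * Z2).trace = (z : ℂ)}.Nonempty →
      ¬ {p : ℝ × ℝ | 0 < p.1 ∧ 0 < p.2 ∧
        (ρQET p.1 p.2 θ * Z2).trace = (z : ℂ)}.Countable) :=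
  ⟨not_countable_trace_ρQET_mul_eq θ z Z1, not_countable_trace_ρQET_mul_eq θ z Z2⟩
end
end
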